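/- Let S_λ be a bounded weighted shift on a directed tree with weights λ. Then f ∈ N(S_λ*) if and only if for every vertex u ∈ V, ∑_{v ∈ Chi(u)} conj(λ_v) f(v) = 0. In particular, if 𝒯 has a root then e_root ∈ N(S_λ*), and for each branching vertex u the space ℓ²(Chi(u)) ⊖ ⟨λ^u⟩ is contained in N(S_λ*), where λ^u ∈ ℓ²(Chi(u)) is the vector (λ_v)_{v∈Chi(u)}. -/

import Mathlib

open ContinuousLinearMap

/-! Since `(S* f)(u) = ⟪S e_u, f⟫` and `S e_u` is the weight vector `λ` restricted to `Chi(u)`,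
`S* f` is the vector of child sums `u ↦ ∑_{v ∈ Chi(u)} conj(λ_v) f(v)`. -/

noncomputable def e {V : Type*} [DecidableEq V] (v : V) : lp (fun _ : V => ℂ) 2 :=
  lp.single 2 v 1

lemma tsum_children_eq_zero {V : Type*} (isRoot : V → Prop) (par : V → V) (lam : V → ℂ) {u : V}
    {f : V → ℂ} (hf : ∀ v, ¬ isRoot v → par v = u → f v = 0) :
    ∑' v : {v : V // ¬ isRoot v ∧ par v = u}, (starRingEnd ℂ) (lam v.1) * f v.1 = 0 := by
  simp [fun v : {v : V // ¬ isRoot v ∧ par v = u} => hf v.1 v.2.1 v.2.2]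

section WeightedShift

variable {V : Type*} [DecidableEq V]

lemma adjoint_apply_eq_inner_e (T : lp (fun _ : V => ℂ) 2 →L[ℂ] lp (fun _ : V => ℂ) 2)
    (f : lp (fun _ : V => ℂ) 2) (u : V) :
    (adjoint T f : ∀ _ : V, ℂ) u = inner ℂ (T (e u)) f := by
  rw [← adjoint_inner_right, e, lp.inner_single_left]
  simp

variable (isRoot : V → Prop) [DecidablePred isRoot] (par : V → V) (lam : V → ℂ)
  {S : lp (fun _ : V => ℂ) 2 →L[ℂ] lp (fun _ : V => ℂ) 2}

lemma weightedShift_apply_e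
    (hS : ∀ f : lp (fun _ : V => ℂ) 2, ∀ v : V,
      (S f : ∀ _ : V, ℂ) v = if isRoot v then 0 else lam v * (f : ∀ _ : V, ℂ) (par v))
    (u v : V) :
    (S (e u) : ∀ _ : V, ℂ) v = {v | ¬ isRoot v ∧ par v = u}.indicator lam v := by
  by_cases hv : isRoot v
  · simp [hS, hv]
  · by_cases hpar : par v = u <;> simp [hS, hv, hpar, e]

lemma weightedShift_adjoint_apply
    (hS : ∀ f : lp (fun _ : V => ℂ) 2, ∀ v : V,
      (S f : ∀ _ : V, ℂ) v = if isRoot v then 0 else lam v * (f : ∀ _ : V, ℂ) (par v))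
    (f : lp (fun _ : V => ℂ) 2) (u : V) :
    (adjoint S f : ∀ _ : V, ℂ) u =
      ∑' v : {v : V // ¬ isRoot v ∧ par v = u}, (starRingEnd ℂ) (lam v.1) * (f : ∀ _ : V, ℂ) v.1 := by
  rw [adjoint_apply_eq_inner_e, lp.inner_eq_tsum]
  refine (tsum_congr fun v => ?_).trans
    (tsum_subtype {v | ¬ isRoot v ∧ par v = u} fun v => (starRingEnd ℂ) (lam v) * (f : ∀ _ : V, ℂ) v).symm
  rw [weightedShift_apply_e isRoot par lam hS, RCLike.inner_apply]
  by_cases hv : v ∈ {v | ¬ isRoot v ∧ par v = u} <;> simp [hv, mul_comm]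

lemma weightedShift_mem_ker_adjoint_iff
    (hS : ∀ f : lp (fun _ : V => ℂ) 2, ∀ v : V,
      (S f : ∀ _ : V, ℂ) v = if isRoot v then 0 else lam v * (f : ∀ _ : V, ℂ) (par v))
    (f : lp (fun _ : V => ℂ) 2) :
    f ∈ LinearMap.ker (adjoint S : lp (fun _ : V => ℂ) 2 →ₗ[ℂ] lp (fun _ : V => ℂ) 2) ↔
      ∀ u : V, ∑' v : {v : V // ¬ isRoot v ∧ par v = u},
        (starRingEnd ℂ) (lam v.1) * (f : ∀ _ : V, ℂ) v.1 = 0 := by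
  simp only [LinearMap.mem_ker, coe_coe, ← weightedShift_adjoint_apply isRoot par lam hS]
  exact ⟨fun h u => by simp [h], fun h => lp.ext (funext h)⟩

end WeightedShift

theorem stmt_14_general {V : Type*} [DecidableEq V]
    (isRoot : V → Prop) [DecidablePred isRoot] (par : V → V) (lam : V → ℂ)
    (S : lp (fun _ : V => ℂ) 2 →L[ℂ] lp (fun _ : V => ℂ) 2)
    (hS : ∀ f : lp (fun _ : V => ℂ) 2, ∀ v : V,
      (S f : ∀ _ : V, ℂ) v = if isRoot v then 0 else lam v * (f : ∀ _ : V, ℂ) (par v)) :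
    (∀ f : lp (fun _ : V => ℂ) 2,
      f ∈ LinearMap.ker (ContinuousLinearMap.adjoint S : lp (fun _ : V => ℂ) 2 →ₗ[ℂ] lp (fun _ : V => ℂ) 2) ↔
        ∀ u : V, (∑' v : {v : V // ¬ isRoot v ∧ par v = u},
          (starRingEnd ℂ) (lam v.1) * (f : ∀ _ : V, ℂ) v.1) = 0) ∧
    (∀ r : V, isRoot r → e r ∈ LinearMap.ker (ContinuousLinearMap.adjoint S : lp (fun _ : V => ℂ) 2 →ₗ[ℂ] lp (fun _ : V => ℂ) 2)) ∧
    (∀ u : V, ∀ f : lp (fun _ : V => ℂ) 2,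
      (∀ v : V, (f : ∀ _ : V, ℂ) v ≠ 0 → ¬ isRoot v ∧ par v = u) →
      (∑' v : {v : V // ¬ isRoot v ∧ par v = u},
          (starRingEnd ℂ) (lam v.1) * (f : ∀ _ : V, ℂ) v.1) = 0 →
      f ∈ LinearMap.ker (ContinuousLinearMap.adjoint S : lp (fun _ : V => ℂ) 2 →ₗ[ℂ] lp (fun _ : V => ℂ) 2)) := by
  have mem_ker_iff := weightedShift_mem_ker_adjoint_iff isRoot par lam hS
  refine ⟨mem_ker_iff, fun r hr => ?_, fun u f hsupp hsum => ?_⟩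
  · refine (mem_ker_iff _).2 fun u => tsum_children_eq_zero isRoot par lam fun v hv _ => ?_
    exact lp.single_apply_ne 2 r 1 (ne_of_apply_ne isRoot fun h => hv (h ▸ hr))
  · refine (mem_ker_iff f).2 fun w => ?_
    obtain rfl | hw := eq_or_ne w u
    · exact hsum
    · refine tsum_children_eq_zero isRoot par lam fun v _ hpar => ?_
      by_contra hfv
      exact hw (hpar.symm.trans (hsupp v hfv).2)

/-- For a bounded weighted shift `S_λ` on a directed tree (encoded via `isRoot` and the
parent map `par`, with `Chi(u) = {v : ¬isRoot v ∧ par v = u}`):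
`f ∈ N(S_λ*)` iff `∑_{v ∈ Chi(u)} conj(λ_v) f(v) = 0` for every `u`. In particular
`e_root ∈ N(S_λ*)`, and every `f` supported in `Chi(u)` orthogonal to the weight vector
`λ^u` belongs to `N(S_λ*)`. -/
theorem stmt_14 {V : Type*} [Countable V] [DecidableEq V]
    (isRoot : V → Prop) [DecidablePred isRoot] (par : V → V) (lam : V → ℂ)
    (S : lp (fun _ : V => ℂ) 2 →L[ℂ] lp (fun _ : V => ℂ) 2)
    (hS : ∀ f : lp (fun _ : V => ℂ) 2, ∀ v : V,
      (S f : ∀ _ : V, ℂ) v = if isRoot v then 0 else lam v * (f : ∀ _ : V, ℂ) (par v)) :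
    (∀ f : lp (fun _ : V => ℂ) 2,
      f ∈ LinearMap.ker (ContinuousLinearMap.adjoint S : lp (fun _ : V => ℂ) 2 →ₗ[ℂ] lp (fun _ : V => ℂ) 2) ↔
        ∀ u : V, (∑' v : {v : V // ¬ isRoot v ∧ par v = u},
          (starRingEnd ℂ) (lam v.1) * (f : ∀ _ : V, ℂ) v.1) = 0) ∧
    (∀ r : V, isRoot r → e r ∈ LinearMap.ker (ContinuousLinearMap.adjoint S : lp (fun _ : V => ℂ) 2 →ₗ[ℂ] lp (fun _ : V => ℂ) 2)) ∧
    (∀ u : V, ∀ f : lp (fun _ : V => ℂ) 2,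
      (∀ v : V, (f : ∀ _ : V, ℂ) v ≠ 0 → ¬ isRoot v ∧ par v = u) →
      (∑' v : {v : V // ¬ isRoot v ∧ par v = u},
          (starRingEnd ℂ) (lam v.1) * (f : ∀ _ : V, ℂ) v.1) = 0 →
      f ∈ LinearMap.ker (ContinuousLinearMap.adjoint S : lp (fun _ : V => ℂ) 2 →ₗ[ℂ] lp (fun _ : V => ℂ) 2)) :=
  stmt_14_general isRoot par lam S hS
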